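/- arXiv:math/0106136 — 4 statements merged into one kernel-verified Lean document; each statement's English description precedes it below -/
import Mathlib

section
/- Let 𝔛 be a collection of subsets of [n] and let ℑ(𝔛) be the two-sided ideal of the Grassmann algebra generated by {∂(e_Y) : Y ∈ 𝔛}. For any subset X ⊆ [n] with |X| ≥ 2: ∂(e_X) ∈ ℑ(𝔛) if and only if e_X ∈ ℑ(𝔛). -/
open ExteriorAlgebra

/-- The Grassmann algebra over `K` on generators `e 0, ..., e (n-1)`. -/
abbrev Grass (K : Type) [Field K] (n : ℕ) := ExteriorAlgebra K (Fin n → K)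

/-- The generator `e i`. -/
noncomputable def gen (K : Type) [Field K] (n : ℕ) (i : Fin n) : Grass K n :=
  ExteriorAlgebra.ι K (Pi.single i 1)

/-- The monomial associated to a list of indices. -/
noncomputable def monList (K : Type) [Field K] (n : ℕ) (l : List (Fin n)) : Grass K n :=
  (l.map (gen K n)).prod

/-- The monomial `e_X` of a subset `X ⊆ [n]`, factors in increasing order. -/
noncomputable def mon (K : Type) [Field K] (n : ℕ) (X : Finset (Fin n)) : Grass K n :=
  monList K n (X.sort (· ≤ ·))

/-- The degree `-1` antiderivation `∂` on the Grassmann algebra with `∂ (e i) = 1`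
(left contraction with the covector sending each generator to `1`). -/
noncomputable def bd (K : Type) [Field K] (n : ℕ) : Grass K n →ₗ[K] Grass K n :=
  CliffordAlgebra.contractLeft (∑ i : Fin n, LinearMap.proj i)

/-- The two-sided ideal `ℑ(𝔛)` generated by the differentials `∂ e_Y`, `Y ∈ 𝔛`. -/
noncomputable def OSIdeal (K : Type) [Field K] (n : ℕ) (X : Set (Finset (Fin n))) :
    TwoSidedIdeal (Grass K n) :=
  TwoSidedIdeal.span ((fun Y => bd K n (mon K n Y)) '' X)

/-! Writing `e_X = e_a e_Z` with `a = min X`, the identity `∂(e_a y) = y - e_a ∂y` and `e_a² = 0`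
give `e_X = e_a ∂e_X`, so `∂e_X ∈ ℑ(𝔛)` forces `e_X ∈ ℑ(𝔛)`. Conversely `ℑ(𝔛)` is closed under `∂`:
by the Leibniz rule `∂(xy) = ∂x y + x̂ ∂y` (with `x ↦ x̂` the grade involution) it suffices that `∂`
kills the generators `∂e_Y` (as `∂² = 0`) and that `ℑ(𝔛)` is stable under the involution, which maps
`∂e_Y` to `±∂e_Y`. -/

theorem TwoSidedIdeal.apply_mem_span {R F : Type*} [Ring R] [FunLike F R R]
    [NonUnitalRingHomClass F R R] (f : F) {s : Set R} (hs : ∀ y ∈ s, f y ∈ TwoSidedIdeal.span s)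
    {x : R} (hx : x ∈ TwoSidedIdeal.span s) : f x ∈ TwoSidedIdeal.span s :=
  (TwoSidedIdeal.mem_comap f).1 <|
    TwoSidedIdeal.span_le.2 (fun y hy => (TwoSidedIdeal.mem_comap f).2 (hs y hy)) hx

namespace CliffordAlgebra

variable {R M : Type*} [CommRing R] [AddCommGroup M] [Module R M] {Q : QuadraticForm R M}
  (d : Module.Dual R M)

theorem contractLeft_mul (x y : CliffordAlgebra Q) :
    contractLeft d (x * y) = contractLeft d x * y + involute x * contractLeft d y := by
  induction x using CliffordAlgebra.induction generalizing y with
  | algebraMap r => simp [contractLeft_algebraMap, contractLeft_algebraMap_mul]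
  | ι m =>
    rw [contractLeft_ι_mul, contractLeft_ι, involute_ι, Algebra.smul_def]
    noncomm_ring
  | mul a b ha hb =>
    rw [mul_assoc, ha, hb, ha b, map_mul]
    noncomm_ring
  | add a b ha hb =>
    rw [add_mul, map_add, ha, hb, map_add, map_add]
    noncomm_ring

theorem involute_contractLeft (x : CliffordAlgebra Q) :
    involute (contractLeft d x) = -contractLeft d (involute x) := by
  induction x using CliffordAlgebra.induction with
  | algebraMap r => simp [contractLeft_algebraMap]
  | ι m => simp [contractLeft_ι]
  | mul a b ha hb =>
    rw [contractLeft_mul, map_add, map_mul, map_mul, ha, hb, involute_involute,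
      map_mul, contractLeft_mul, involute_involute]
    noncomm_ring
  | add a b ha hb =>
    rw [map_add, map_add, ha, hb, map_add, map_add]
    abel

theorem contractLeft_mem_span {s : Set (CliffordAlgebra Q)}
    (hs : ∀ y ∈ s, involute y ∈ TwoSidedIdeal.span s)
    (hd : ∀ y ∈ s, contractLeft d y ∈ TwoSidedIdeal.span s)
    {x : CliffordAlgebra Q} (hx : x ∈ TwoSidedIdeal.span s) :
    contractLeft d x ∈ TwoSidedIdeal.span s := by
  induction hx using TwoSidedIdeal.span_induction with
  | mem y hy => exact hd y hy
  | zero => simp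
  | add x y _ _ hx hy => simpa using add_mem hx hy
  | neg x _ hx => simpa using neg_mem hx
  | left_absorb a x hx hdx =>
    rw [contractLeft_mul]
    exact add_mem (TwoSidedIdeal.mul_mem_left _ _ _ hx) (TwoSidedIdeal.mul_mem_left _ _ _ hdx)
  | right_absorb b x hx hdx =>
    rw [contractLeft_mul]
    exact add_mem (TwoSidedIdeal.mul_mem_right _ _ _ hdx)
      (TwoSidedIdeal.mul_mem_right _ _ _ (TwoSidedIdeal.apply_mem_span involute hs hx))

end CliffordAlgebra

section Grassmann

variable {K : Type} [Field K] {n : ℕ}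

theorem bd_gen_mul (a : Fin n) (y : Grass K n) :
    bd K n (gen K n a * y) = y - gen K n a * bd K n y := by
  have h : (∑ i, LinearMap.proj i : Module.Dual K (Fin n → K)) (Pi.single a 1) = 1 := by
    simp [Pi.single_apply]
  rw [bd, gen, CliffordAlgebra.contractLeft_ι_mul, h, one_smul]

theorem gen_mul_bd_gen_mul (a : Fin n) (y : Grass K n) :
    gen K n a * bd K n (gen K n a * y) = gen K n a * y := by
  rw [bd_gen_mul, mul_sub, ← mul_assoc, gen, ι_sq_zero, zero_mul, sub_zero]

theorem exists_mon_eq_gen_mul_bd_mon {X : Finset (Fin n)} (hX : X.Nonempty) :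
    ∃ a, mon K n X = gen K n a * bd K n (mon K n X) := by
  obtain ⟨a, l, hal⟩ := List.exists_cons_of_ne_nil
    (List.ne_nil_of_length_pos (by simpa using hX.card_pos) : X.sort (· ≤ ·) ≠ [])
  have hmon : mon K n X = gen K n a * monList K n l := by simp [mon, hal, monList]
  exact ⟨a, by rw [hmon, gen_mul_bd_gen_mul]⟩

theorem involute_mon (X : Finset (Fin n)) :
    CliffordAlgebra.involute (mon K n X) = (-1 : K) ^ X.card • mon K n X := by
  have hgen : gen K n = ι K ∘ (Pi.single · 1) := rfl
  rw [mon, monList, hgen, ← List.map_map, CliffordAlgebra.involute_prod_map_ι, List.length_map,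
    Finset.length_sort]

theorem bd_mem_OSIdeal {Xs : Set (Finset (Fin n))} {x : Grass K n}
    (hx : x ∈ OSIdeal K n Xs) : bd K n x ∈ OSIdeal K n Xs := by
  refine CliffordAlgebra.contractLeft_mem_span _ ?_ ?_ hx
  · rintro - ⟨Y, hY, rfl⟩
    rw [bd, CliffordAlgebra.involute_contractLeft, involute_mon, map_smul, ← bd, Algebra.smul_def]
    exact neg_mem (TwoSidedIdeal.mul_mem_left _ _ _ (TwoSidedIdeal.subset_span ⟨Y, hY, rfl⟩))
  · rintro - ⟨Y, hY, rfl⟩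
    rw [bd, CliffordAlgebra.contractLeft_contractLeft]
    exact zero_mem _

end Grassmann

/-- for `|X| ≥ 2`, `∂ e_X ∈ ℑ(𝔛)` iff `e_X ∈ ℑ(𝔛)`. -/
theorem stmt2 (K : Type) [Field K] (n : ℕ) (Xs : Set (Finset (Fin n)))
    (X : Finset (Fin n)) (hX : 2 ≤ X.card) :
    bd K n (mon K n X) ∈ OSIdeal K n Xs ↔ mon K n X ∈ OSIdeal K n Xs := by
  refine ⟨fun h => ?_, bd_mem_OSIdeal⟩
  obtain ⟨a, ha⟩ := exists_mon_eq_gen_mul_bd_mon (K := K) (X := X) (Finset.card_pos.mp (by omega))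
  rw [ha]
  exact TwoSidedIdeal.mul_mem_left _ _ _ h
end

section
/- If a matroid M is ℓ-chordal (ℓ ≥ 4), then its Orlik–Solomon algebra is (ℓ−2)-adic; that is, the ideal generated by differentials of all circuits equals the ideal generated by differentials of circuits with at most ℓ−1 elements: ℑ(𝔠) = ℑ(𝔠_{ℓ−1}). -/
/-!
Induct on `|C|`. A circuit `C` with `|C| ≥ ℓ` has a chord: `C = C₁ ∆ C₂` with `C₁ ∩ C₂ = {i}`.
As `M` is simple, `|C₁|, |C₂| ≥ 3`, so both are shorter than `C`, since `|C| = |C₁| + |C₂| - 2`.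
Up to sign `e_{C₁} = e_i a`, `e_{C₂} = e_i b` and `e_C = a b` for monomials `a, b`; the Leibniz
rule together with `∂(e_i x) = x - e_i ∂x` gives
  `∂(a b) = ∂a · ∂(e_i b) ± ∂(e_i a) · ∂b`,
so `∂ e_C` lies in the ideal generated by `∂ e_{C₁}` and `∂ e_{C₂}`.
-/

open ExteriorAlgebra

/-- A circuit of a matroid: a minimal dependent (finite) set. -/
def IsCircuit {α : Type} [DecidableEq α] (M : Matroid α) (C : Finset α) : Prop :=
  M.Dep (C : Set α) ∧ ∀ D : Finset α, D ⊂ C → ¬ M.Dep (D : Set α)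

/-- `i` is a chord of the circuit `C`, witnessed by circuits `C₁, C₂` with
`C₁ ∩ C₂ = {i}` and `C = C₁ Δ C₂`. -/
def IsChord {α : Type} [DecidableEq α] (M : Matroid α) (C : Finset α) (i : α) : Prop :=
  ∃ C₁ C₂ : Finset α, IsCircuit M C₁ ∧ IsCircuit M C₂ ∧ C₁ ∩ C₂ = {i} ∧ C = symmDiff C₁ C₂

def HasChord {α : Type} [DecidableEq α] (M : Matroid α) (C : Finset α) : Prop :=
  ∃ i, IsChord M C i

/-- `M` is `ℓ`-chordal: every circuit with at least `ℓ` elements has a chord. -/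
def Chordal {α : Type} [DecidableEq α] (M : Matroid α) (l : ℕ) : Prop :=
  ∀ C : Finset α, IsCircuit M C → l ≤ C.card → HasChord M C

/-- `M` is simple: every circuit has at least 3 elements. -/
def SimpleM {α : Type} [DecidableEq α] (M : Matroid α) : Prop :=
  ∀ C : Finset α, IsCircuit M C → 3 ≤ C.card

/-- `M` is binary: the symmetric difference of two distinct circuits contains a circuit. -/
def BinaryM {α : Type} [DecidableEq α] (M : Matroid α) : Prop :=
  ∀ C D : Finset α, IsCircuit M C → IsCircuit M D → C ≠ D →
    ∃ C', IsCircuit M C' ∧ C' ⊆ symmDiff C D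

/-- The set `𝔠` of circuits of `M`. -/
def Circuits {α : Type} [DecidableEq α] (M : Matroid α) : Set (Finset α) :=
  {C | IsCircuit M C}

/-- The set `𝔠_k` of circuits of `M` with at most `k` elements. -/
def CircuitsLe {α : Type} [DecidableEq α] (M : Matroid α) (k : ℕ) : Set (Finset α) :=
  {C | IsCircuit M C ∧ C.card ≤ k}

namespace CliffordAlgebra

variable {R M : Type*} [CommRing R] [AddCommGroup M] [Module R M] {Q : QuadraticForm R M}

theorem contractLeft_prod_map_ι_mul (d : Module.Dual R M) (l : List M) (x : CliffordAlgebra Q) :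
    contractLeft d ((l.map (ι Q)).prod * x) =
      contractLeft d (l.map (ι Q)).prod * x +
        ((-1 : ℤ) ^ l.length) • ((l.map (ι Q)).prod * contractLeft d x) := by
  induction l with
  | nil => simp
  | cons v l ih =>
    simp only [List.map_cons, List.prod_cons, mul_assoc, contractLeft_ι_mul, ih,
      List.length_cons, pow_succ, mul_add, sub_mul, mul_smul_comm, smul_mul_assoc]
    module

end CliffordAlgebra

namespace ExteriorAlgebra

open CliffordAlgebra

variable {R M : Type*} [CommRing R] [AddCommGroup M] [Module R M]

theorem ι_mul_ι_anticomm (v w : M) : ι R v * ι R w = -(ι R w * ι R v) :=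
  eq_neg_of_add_eq_zero_left (ι_add_mul_swap v w)

theorem prod_map_ι_mul_ι (l : List M) (v : M) :
    (l.map (ι R)).prod * ι R v = ((-1 : ℤ) ^ l.length) • (ι R v * (l.map (ι R)).prod) := by
  induction l with
  | nil => simp
  | cons w l ih =>
    rw [List.map_cons, List.prod_cons, mul_assoc, ih, mul_smul_comm, ← mul_assoc,
      ι_mul_ι_anticomm w v, List.length_cons, pow_succ, neg_mul, mul_assoc]
    module

theorem prod_map_ι_eq_of_perm {l l' : List M} (h : l.Perm l') :
    ∃ k : ℕ, (l.map (ι R)).prod = ((-1 : ℤ) ^ k) • (l'.map (ι R)).prod := by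
  induction h with
  | nil => exact ⟨0, by simp⟩
  | cons v _ ih =>
    obtain ⟨k, hk⟩ := ih
    exact ⟨k, by simp only [List.map_cons, List.prod_cons, hk, mul_smul_comm]⟩
  | swap v w l =>
    refine ⟨1, ?_⟩
    simp only [List.map_cons, List.prod_cons, ← mul_assoc, pow_one, neg_smul, one_smul,
      ι_mul_ι_anticomm v w, neg_mul, neg_neg]
  | trans _ _ ih₁ ih₂ =>
    obtain ⟨k₁, hk₁⟩ := ih₁
    obtain ⟨k₂, hk₂⟩ := ih₂
    exact ⟨k₁ + k₂, by rw [hk₁, hk₂, smul_smul, pow_add]⟩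

variable (d : Module.Dual R M) {v : M}

theorem contractLeft_prod_map_ι_mul_ι (hv : d v = 1) (l : List M) :
    contractLeft d (l.map (ι R)).prod * ι R v =
      -((-1 : ℤ) ^ l.length) • (ι R v * contractLeft d (l.map (ι R)).prod) := by
  have h := contractLeft_prod_map_ι_mul d l (ι R v)
  rw [prod_map_ι_mul_ι, map_zsmul, contractLeft_ι_mul, contractLeft_ι, hv, map_one, mul_one,
    one_smul] at h
  rw [eq_sub_of_add_eq h.symm]
  module

theorem contractLeft_prod_mul_prod (hv : d v = 1) (la lb : List M) :
    contractLeft d ((la.map (ι R)).prod * (lb.map (ι R)).prod) =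
      contractLeft d (la.map (ι R)).prod * contractLeft d (ι R v * (lb.map (ι R)).prod) +
        ((-1 : ℤ) ^ la.length) •
          (contractLeft d (ι R v * (la.map (ι R)).prod) * contractLeft d (lb.map (ι R)).prod) := by
  rw [contractLeft_prod_map_ι_mul, contractLeft_ι_mul, contractLeft_ι_mul, hv, one_smul, one_smul,
    mul_sub, sub_mul, ← mul_assoc, contractLeft_prod_map_ι_mul_ι d hv]
  -- after expanding `∂(v a) = a - v ∂a` and `∂(v b) = b - v ∂b`, the two terms `± v ∂a ∂b` cancel
  simp only [smul_mul_assoc, mul_assoc]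
  module

theorem contractLeft_prod_mul_prod_mem (I : TwoSidedIdeal (ExteriorAlgebra R M)) (hv : d v = 1)
    {la lb : List M} (ha : contractLeft d (ι R v * (la.map (ι R)).prod) ∈ I)
    (hb : contractLeft d (ι R v * (lb.map (ι R)).prod) ∈ I) :
    contractLeft d ((la.map (ι R)).prod * (lb.map (ι R)).prod) ∈ I := by
  rw [contractLeft_prod_mul_prod d hv]
  exact I.add_mem (I.mul_mem_left _ _ hb) (I.zsmul_mem _ (I.mul_mem_right _ _ ha))

end ExteriorAlgebra

theorem TwoSidedIdeal.neg_one_pow_zsmul_mem_iff {R : Type*} [Ring R] (I : TwoSidedIdeal R)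
    (k : ℕ) {x : R} : ((-1 : ℤ) ^ k) • x ∈ I ↔ x ∈ I := by
  rcases neg_one_pow_eq_or ℤ k with h | h <;> simp [h]

theorem LinearMap.sum_proj_single_one {η R : Type*} [Fintype η] [DecidableEq η] [Semiring R]
    (i : η) : (∑ j, LinearMap.proj j : (η → R) →ₗ[R] R) (Pi.single i 1) = 1 := by
  simp

theorem Finset.card_symmDiff_add_two_mul_card_inter {α : Type*} [DecidableEq α] (s t : Finset α) :
    (symmDiff s t).card + 2 * (s ∩ t).card = s.card + t.card := by
  have h := card_sdiff_add_card_eq_card (s := s ∩ t) (t := s ∪ t)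
    (inter_subset_left.trans subset_union_left)
  rw [symmDiff_eq_sup_sdiff_inf, sup_eq_union, inf_eq_inter]
  have := card_union_add_card_inter s t
  omega

section OrlikSolomon

variable {K : Type} [Field K] {n : ℕ}

theorem monList_eq_prod_map_ι (l : List (Fin n)) :
    monList K n l = ((l.map fun i => (Pi.single i 1 : Fin n → K)).map (ι K)).prod := by
  rw [monList, List.map_map]
  rfl

theorem bd_monList_append_mem (I : TwoSidedIdeal (Grass K n)) (i : Fin n) {la lb : List (Fin n)}
    (ha : bd K n (monList K n (i :: la)) ∈ I) (hb : bd K n (monList K n (i :: lb)) ∈ I) :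
    bd K n (monList K n (la ++ lb)) ∈ I := by
  simp only [bd, monList_eq_prod_map_ι, List.map_cons, List.map_append, List.prod_cons,
    List.prod_append] at *
  exact contractLeft_prod_mul_prod_mem _ I (LinearMap.sum_proj_single_one i) ha hb

theorem bd_mon_mem_iff (I : TwoSidedIdeal (Grass K n)) {X : Finset (Fin n)} {l : List (Fin n)}
    (h : X.val = l) : bd K n (mon K n X) ∈ I ↔ bd K n (monList K n l) ∈ I := by
  have hperm : (X.sort (· ≤ ·)).Perm l := Multiset.coe_eq_coe.mp (by rw [Finset.sort_eq, h])
  obtain ⟨k, hk⟩ :=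
    prod_map_ι_eq_of_perm (R := K) (hperm.map fun i => (Pi.single i 1 : Fin n → K))
  rw [mon, monList_eq_prod_map_ι, monList_eq_prod_map_ι, hk, map_zsmul,
    I.neg_one_pow_zsmul_mem_iff]

theorem bd_mon_symmDiff_mem (I : TwoSidedIdeal (Grass K n)) {C₁ C₂ : Finset (Fin n)} {i : Fin n}
    (hi : C₁ ∩ C₂ = {i}) (h₁ : bd K n (mon K n C₁) ∈ I) (h₂ : bd K n (mon K n C₂) ∈ I) :
    bd K n (mon K n (symmDiff C₁ C₂)) ∈ I := by
  have hmem : ∀ x, x ∈ C₁ ∧ x ∈ C₂ ↔ x = i := fun x => by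
    rw [← Finset.mem_inter, hi, Finset.mem_singleton]
  have hval : ∀ {C : Finset (Fin n)}, i ∈ C → C.val = ↑(i :: (C.erase i).sort (· ≤ ·)) :=
    fun hC => by rw [← Multiset.cons_coe, Finset.sort_eq, Finset.erase_val, Multiset.cons_erase hC]
  have hdisj : Disjoint (C₁.erase i) (C₂.erase i) := by
    rw [Finset.disjoint_left]; grind
  have hsymm :
      (symmDiff C₁ C₂).val = ↑((C₁.erase i).sort (· ≤ ·) ++ (C₂.erase i).sort (· ≤ ·)) := by
    rw [← Multiset.coe_add, Finset.sort_eq, Finset.sort_eq]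
    change _ = (Finset.disjUnion _ _ hdisj).val
    congr 1
    ext x
    simp only [Finset.mem_symmDiff, Finset.mem_disjUnion, Finset.mem_erase]
    grind
  rw [bd_mon_mem_iff I (hval ((hmem i).2 rfl).1)] at h₁
  rw [bd_mon_mem_iff I (hval ((hmem i).2 rfl).2)] at h₂
  exact (bd_mon_mem_iff I hsymm).2 (bd_monList_append_mem I i h₁ h₂)

theorem bd_mon_mem_OSIdeal_circuitsLe {M : Matroid (Fin n)} (hs : SimpleM M) {l : ℕ}
    (hch : Chordal M l) {C : Finset (Fin n)} (hC : IsCircuit M C) :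
    bd K n (mon K n C) ∈ OSIdeal K n (CircuitsLe M (l - 1)) := by
  induction hk : C.card using Nat.strong_induction_on generalizing C with
  | _ k ih =>
    by_cases hsmall : C.card ≤ l - 1
    · exact TwoSidedIdeal.subset_span ⟨C, ⟨hC, hsmall⟩, rfl⟩
    obtain ⟨i, C₁, C₂, hC₁, hC₂, hi, rfl⟩ := hch C hC (by omega)
    have hcard := Finset.card_symmDiff_add_two_mul_card_inter C₁ C₂
    rw [hi, Finset.card_singleton] at hcard
    have h₁ := hs C₁ hC₁
    have h₂ := hs C₂ hC₂
    exact bd_mon_symmDiff_mem _ hi (ih _ (by omega) hC₁ rfl) (ih _ (by omega) hC₂ rfl)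

end OrlikSolomon

theorem stmt7_general (K : Type) [Field K] (n : ℕ) (M : Matroid (Fin n))
    (hs : SimpleM M) (l : ℕ) (hch : Chordal M l) :
    OSIdeal K n (Circuits M) = OSIdeal K n (CircuitsLe M (l - 1)) := by
  refine le_antisymm ?_ (TwoSidedIdeal.span_mono (Set.image_mono fun C hC => hC.1))
  rw [OSIdeal, TwoSidedIdeal.span_le]
  rintro _ ⟨C, hC, rfl⟩
  exact bd_mon_mem_OSIdeal_circuitsLe hs hch hC

/-- if `M` is `ℓ`-chordal (`ℓ ≥ 4`), then `ℑ(𝔠) = ℑ(𝔠_{ℓ-1})`,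
i.e. `OS(M)` is `(ℓ-2)`-adic. -/
theorem stmt7 (K : Type) [Field K] (n : ℕ) (M : Matroid (Fin n)) (hE : M.E = Set.univ)
    (hs : SimpleM M) (l : ℕ) (hl : 4 ≤ l) (hch : Chordal M l) :
    OSIdeal K n (Circuits M) = OSIdeal K n (CircuitsLe M (l - 1)) :=
  stmt7_general K n M hs l hch
end

section
/- For any family 𝔷 ⊆ 2^{[n]}, cl_Δ(𝔷) ⊆ cl_{Δ′}(𝔷); equivalently, every Δ′-closed family 𝔛 ⊆ 2^{[n]} is Δ-closed. -/
/-- A family of subsets is `Δ`-closed: upward closed, and closed under symmetric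
differences of two members of size `≥ 2` meeting in exactly one element. -/
def DeltaClosed {α : Type} [DecidableEq α] (X : Set (Finset α)) : Prop :=
  (∀ A B : Finset α, A ⊆ B → A ∈ X → B ∈ X) ∧
  (∀ A B : Finset α, ∀ i : α, A ∈ X → B ∈ X → 2 ≤ A.card → 2 ≤ B.card →
      A ∩ B = {i} → symmDiff A B ∈ X)

/-- The smallest `Δ`-closed family containing `Z`. -/
def clDelta {α : Type} [DecidableEq α] (Z : Set (Finset α)) : Set (Finset α) :=
  ⋂₀ {X | DeltaClosed X ∧ Z ⊆ X}

/-- A family of subsets is `Δ'`-closed: upward closed, and whenever `i ∈ A` and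
`A \ {j} ∈ X` for every `j ∈ A \ {i}`, then `A \ {i} ∈ X`. -/
def DeltaClosed' {α : Type} [DecidableEq α] (X : Set (Finset α)) : Prop :=
  (∀ A B : Finset α, A ⊆ B → A ∈ X → B ∈ X) ∧
  (∀ A : Finset α, ∀ i : α, i ∈ A → (∀ j ∈ A \ {i}, A \ {j} ∈ X) → A \ {i} ∈ X)

/-- The smallest `Δ'`-closed family containing `Z`. -/
def clDelta' {α : Type} [DecidableEq α] (Z : Set (Finset α)) : Set (Finset α) :=
  ⋂₀ {X | DeltaClosed' X ∧ Z ⊆ X}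

/-- every `Δ'`-closed family is `Δ`-closed; equivalently, for every family
`Z ⊆ 2^[n]`, `cl_Δ(Z) ⊆ cl_{Δ'}(Z)`. -/
theorem stmt13 (n : ℕ) :
    (∀ X : Set (Finset (Fin n)), DeltaClosed' X → DeltaClosed X) ∧
    (∀ Z : Set (Finset (Fin n)), clDelta Z ⊆ clDelta' Z) := by
  have main : ∀ X : Set (Finset (Fin n)), DeltaClosed' X → DeltaClosed X := by
    rintro X ⟨hup, hd⟩
    refine ⟨hup, ?_⟩
    intro A B i hA hB _ _ hAB
    have hmem : ∀ x, x ∈ A ∧ x ∈ B ↔ x = i := fun x => by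
      rw [← Finset.mem_inter, hAB, Finset.mem_singleton]
    have hiA : i ∈ A := ((hmem i).mpr rfl).1
    have hiB : i ∈ B := ((hmem i).mpr rfl).2
    have key : symmDiff A B = (A ∪ B) \ {i} := by
      ext x
      have hx := hmem x
      simp only [Finset.mem_symmDiff, Finset.mem_sdiff, Finset.mem_union,
        Finset.mem_singleton]
      constructor
      · rintro (⟨h1, h2⟩ | ⟨h1, h2⟩)
        · exact ⟨Or.inl h1, fun he => h2 (he ▸ hiB)⟩
        · exact ⟨Or.inr h1, fun he => h2 (he ▸ hiA)⟩
      · rintro ⟨h1 | h1, h2⟩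
        · exact Or.inl ⟨h1, fun hb => h2 (hx.mp ⟨h1, hb⟩)⟩
        · exact Or.inr ⟨h1, fun ha => h2 (hx.mp ⟨ha, h1⟩)⟩
    rw [key]
    apply hd (A ∪ B) i (Finset.mem_union_left _ hiA)
    intro j hj
    rw [Finset.mem_sdiff, Finset.mem_union, Finset.mem_singleton] at hj
    obtain ⟨hjAB, hji⟩ := hj
    rcases hjAB with hjA | hjB
    · refine hup B _ ?_ hB
      intro x hxB
      rw [Finset.mem_sdiff, Finset.mem_union, Finset.mem_singleton]
      exact ⟨Or.inr hxB, fun he => hji (((hmem j).mp ⟨hjA, he ▸ hxB⟩))⟩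
    · refine hup A _ ?_ hA
      intro x hxA
      rw [Finset.mem_sdiff, Finset.mem_union, Finset.mem_singleton]
      exact ⟨Or.inl hxA, fun he => hji (((hmem j).mp ⟨he ▸ hxA, hjB⟩))⟩
  refine ⟨main, ?_⟩
  intro Z A hA
  have hZsub : Z ⊆ clDelta' Z := by
    intro a ha X hX
    exact hX.2 ha
  have hclosed : DeltaClosed' (clDelta' Z) := by
    constructor
    · intro A B hAB hAmem X hX
      exact hX.1.1 A B hAB (hAmem X hX)
    · intro A i hi hall X hX
      exact hX.1.2 A i hi (fun j hj => hall j hj X hX)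
  exact hA (clDelta' Z) ⟨main _ hclosed, hZsub⟩
end

section
/- Let M be a binary matroid, C a circuit of M, and D a circuit with |C ∩ D| = |D| − 1 (i.e., D has exactly one element x outside C). Then C Δ D is a circuit of M, (C Δ D) ∩ D = {x}, and C = (C Δ D) Δ D; in particular, x is a chord of C. -/
/-- in a binary matroid, if `C, D` are circuits with `|C ∩ D| = |D| - 1`,
with `x` the unique element of `D` outside `C`, then `C Δ D` is a circuit,
`(C Δ D) ∩ D = {x}`, `C = (C Δ D) Δ D`; in particular `x` is a chord of `C`. -/
theorem stmt18 {α : Type} [DecidableEq α] (M : Matroid α) (hs : SimpleM M)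
    (hb : BinaryM M) (C D : Finset α) (hC : IsCircuit M C) (hD : IsCircuit M D)
    (hcard : (C ∩ D).card = D.card - 1) (x : α) (hx : D \ C = {x}) :
    IsCircuit M (symmDiff C D) ∧ (symmDiff C D) ∩ D = {x} ∧
      C = symmDiff (symmDiff C D) D ∧ IsChord M C x := by
  have hxmem : x ∈ D \ C := by rw [hx]; exact Finset.mem_singleton_self x
  have hxD : x ∈ D := (Finset.mem_sdiff.mp hxmem).1
  have hxC : x ∉ C := (Finset.mem_sdiff.mp hxmem).2
  have hDcard : 3 ≤ D.card := hs D hD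
  have hCD : (C ∩ D).Nonempty := by
    rw [← Finset.card_pos, hcard]; omega
  obtain ⟨y, hy⟩ := hCD
  have hyC : y ∈ C := (Finset.mem_inter.mp hy).1
  have hyD : y ∈ D := (Finset.mem_inter.mp hy).2
  have hne : C ≠ D := by
    intro h; rw [h, Finset.sdiff_self] at hx
    exact absurd hx.symm (Finset.singleton_ne_empty x)
  obtain ⟨C', hC', hsub⟩ := hb C D hC hD hne
  have hmemC' : ∀ z ∈ C', (z ∈ C ∧ z ∉ D) ∨ z = x := by
    intro z hz
    have h := hsub hz
    rw [Finset.mem_symmDiff] at h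
    rcases h with ⟨h1, h2⟩ | ⟨h1, h2⟩
    · exact Or.inl ⟨h1, h2⟩
    · right
      have hz' : z ∈ D \ C := Finset.mem_sdiff.mpr ⟨h1, h2⟩
      rw [hx] at hz'; exact Finset.mem_singleton.mp hz'
  have hxC' : x ∈ C' := by
    by_contra hxn
    have hsubC : C' ⊆ C := by
      intro z hz
      rcases hmemC' z hz with ⟨h1, _⟩ | h
      · exact h1
      · exact absurd (h ▸ hz) hxn
    have hssC : C' ⊂ C := by
      refine ⟨hsubC, fun hcc => ?_⟩
      have hyc' : y ∈ C' := hcc hyC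
      rcases hmemC' y hyc' with ⟨_, h2⟩ | h
      · exact h2 hyD
      · exact hxC (h ▸ hyC)
    exact hC.2 C' hssC hC'.1
  have hne2 : C' ≠ D := by
    intro h
    rcases hmemC' y (h ▸ hyD) with ⟨_, h2⟩ | h'
    · exact h2 hyD
    · exact hxC (h' ▸ hyC)
  obtain ⟨C'', hC'', hsub2⟩ := hb C' D hC' hD hne2
  have hsubC : C'' ⊆ C := by
    intro z hz
    have h := hsub2 hz
    rw [Finset.mem_symmDiff] at h
    rcases h with ⟨h1, h2⟩ | ⟨h1, h2⟩
    · rcases hmemC' z h1 with ⟨h3, _⟩ | h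
      · exact h3
      · exact absurd (h ▸ hxD) h2
    · by_contra hzc
      have hz' : z ∈ D \ C := Finset.mem_sdiff.mpr ⟨h1, hzc⟩
      rw [hx] at hz'
      exact h2 (Finset.mem_singleton.mp hz' ▸ hxC')
  have heq : C'' = C := by
    by_contra h
    exact hC.2 C'' ⟨hsubC, fun hc => h (Finset.Subset.antisymm hsubC hc)⟩ hC''.1
  have hCsub : C ⊆ symmDiff C' D := heq ▸ hsub2
  have hsub3 : symmDiff C D ⊆ C' := by
    intro z hz
    rw [Finset.mem_symmDiff] at hz
    rcases hz with ⟨h1, h2⟩ | ⟨h1, h2⟩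
    · have h := hCsub h1
      rw [Finset.mem_symmDiff] at h
      rcases h with ⟨h3, _⟩ | ⟨h3, _⟩
      · exact h3
      · exact absurd h3 h2
    · have hz' : z ∈ D \ C := Finset.mem_sdiff.mpr ⟨h1, h2⟩
      rw [hx] at hz'
      exact Finset.mem_singleton.mp hz' ▸ hxC'
  have hC'eq : C' = symmDiff C D := Finset.Subset.antisymm hsub hsub3
  have hcirc : IsCircuit M (symmDiff C D) := hC'eq ▸ hC'
  have hinter : (symmDiff C D) ∩ D = {x} := by
    ext z
    simp only [Finset.mem_inter, Finset.mem_symmDiff, Finset.mem_singleton]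
    constructor
    · rintro ⟨(⟨_, h2⟩ | ⟨h1, h2⟩), hzD⟩
      · exact absurd hzD h2
      · have hz' : z ∈ D \ C := Finset.mem_sdiff.mpr ⟨h1, h2⟩
        rw [hx] at hz'; exact Finset.mem_singleton.mp hz'
    · rintro rfl; exact ⟨Or.inr ⟨hxD, hxC⟩, hxD⟩
  have hcancel : C = symmDiff (symmDiff C D) D := (symmDiff_symmDiff_cancel_right D C).symm
  exact ⟨hcirc, hinter, hcancel, ⟨symmDiff C D, D, hcirc, hD, hinter, hcancel⟩⟩
end
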